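/- arXiv:0907.0285 — 13 statements merged into one kernel-verified Lean document; each statement's English description precedes it below -/
import Mathlib

section
/- Let f be a Boolean network on n+1 variables (a function f : (Fin (n+1) → Bool) → (Fin (n+1) → Bool)) whose last component does not depend on the last coordinate, and let g be the reduction of f obtained by eliminating the last variable. If x : Fin (n+1) → Bool is a steady state of f (i.e., f x = x), then its projection Fin.init x onto the first n coordinates is a steady state of g (i.e., g (Fin.init x) = Fin.init x). -/
/-- Projection of a steady state of `f` is a steady state of the
reduction `g` obtained by eliminating the last variable. -/
theorem steady_state_projection (n : ℕ)
    (f : (Fin (n+1) → Bool) → (Fin (n+1) → Bool))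
    (hf : ∀ (x : Fin (n+1) → Bool) (b : Bool),
      f (Function.update x (Fin.last n) b) (Fin.last n) = f x (Fin.last n))
    (g : (Fin n → Bool) → (Fin n → Bool))
    (hg : ∀ (y : Fin n → Bool) (i : Fin n),
      g y i = f (Fin.snoc y (f (Fin.snoc y false) (Fin.last n))) (Fin.castSucc i))
    (x : Fin (n+1) → Bool) (hx : f x = x) :
    g (Fin.init x) = Fin.init x := by
  have hsnoc : ∀ b : Bool, (Fin.snoc (Fin.init x) b : Fin (n+1) → Bool)
      = Function.update x (Fin.last n) b := by
    intro b
    ext i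
    rcases Fin.eq_castSucc_or_eq_last i with ⟨j, rfl⟩ | rfl
    · simp [Fin.snoc_castSucc, Function.update_of_ne (Fin.castSucc_lt_last j).ne, Fin.init]
    · simp
  have hval : f (Fin.snoc (Fin.init x) false) (Fin.last n) = x (Fin.last n) := by
    rw [hsnoc, hf, hx]
  funext i
  rw [hg, hval, hsnoc, Function.update_eq_self, hx]
  rfl
end

section
/- Let f be a Boolean network on n+1 variables whose last component does not depend on the last coordinate, and let g be the reduction of f obtained by eliminating the last variable. If y : Fin n → Bool is a steady state of g, then z = Fin.snoc y (f (Fin.snoc y false) (Fin.last n)) is a steady state of f, and z is the unique steady state of f with Fin.init z = y. -/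
/-- A steady state of the reduction `g` lifts to a unique steady state
of `f` projecting onto it. -/
theorem steady_state_lift (n : ℕ)
    (f : (Fin (n+1) → Bool) → (Fin (n+1) → Bool))
    (hf : ∀ (x : Fin (n+1) → Bool) (b : Bool),
      f (Function.update x (Fin.last n) b) (Fin.last n) = f x (Fin.last n))
    (g : (Fin n → Bool) → (Fin n → Bool))
    (hg : ∀ (y : Fin n → Bool) (i : Fin n),
      g y i = f (Fin.snoc y (f (Fin.snoc y false) (Fin.last n))) (Fin.castSucc i))
    (y : Fin n → Bool) (hy : g y = y) :
    f (Fin.snoc y (f (Fin.snoc y false) (Fin.last n)))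
        = Fin.snoc y (f (Fin.snoc y false) (Fin.last n)) ∧
      ∀ z : Fin (n+1) → Bool, f z = z → Fin.init z = y →
        z = Fin.snoc y (f (Fin.snoc y false) (Fin.last n)) := by
  set c := f (Fin.snoc y false) (Fin.last n) with hc
  have key : ∀ b : Bool, f (Fin.snoc y b) (Fin.last n) = c := by
    intro b
    have := hf (Fin.snoc y false) b
    rwa [Fin.update_snoc_last] at this
  constructor
  · funext i
    refine Fin.lastCases ?_ ?_ i
    · rw [key c, Fin.snoc_last]
    · intro j
      have := hg y j
      rw [hy] at this
      rw [← this, Fin.snoc_castSucc]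
  · intro z hz hinit
    have hzeq : z = Fin.snoc y (z (Fin.last n)) := by
      rw [← hinit, Fin.snoc_init_self]
    have : z (Fin.last n) = c := by
      conv_lhs => rw [← hz, hzeq, key]
    rw [hzeq, this]
end

section
/- Let f be a Boolean network on n+1 variables whose last component does not depend on the last coordinate, and let g be the reduction of f obtained by eliminating the last variable. Then the projection map Fin.init restricts to a bijection from the set of steady states of f onto the set of steady states of g. -/
private lemma update_snoc_last {n : ℕ} (y : Fin n → Bool) (b c : Bool) :
    Function.update (Fin.snoc y c : Fin (n+1) → Bool) (Fin.last n) b = Fin.snoc y b := by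
  funext j
  refine Fin.lastCases ?_ ?_ j
  · simp
  · intro i
    rw [Function.update_of_ne (Fin.castSucc_lt_last i).ne]
    simp

/-- `Fin.init` restricts to a bijection from the steady states of `f`
onto the steady states of the reduction `g`. -/
theorem steady_state_bijection (n : ℕ)
    (f : (Fin (n+1) → Bool) → (Fin (n+1) → Bool))
    (hf : ∀ (x : Fin (n+1) → Bool) (b : Bool),
      f (Function.update x (Fin.last n) b) (Fin.last n) = f x (Fin.last n))
    (g : (Fin n → Bool) → (Fin n → Bool))
    (hg : ∀ (y : Fin n → Bool) (i : Fin n),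
      g y i = f (Fin.snoc y (f (Fin.snoc y false) (Fin.last n))) (Fin.castSucc i)) :
    Set.BijOn Fin.init {x | f x = x} {y | g y = y} := by
  have key : ∀ (y : Fin n → Bool) (b : Bool),
      f (Fin.snoc y b) (Fin.last n) = f (Fin.snoc y false) (Fin.last n) := by
    intro y b
    rw [← update_snoc_last y b false, hf]
  have steady_form : ∀ x, f x = x →
      x = Fin.snoc (Fin.init x) (f (Fin.snoc (Fin.init x) false) (Fin.last n)) := by
    intro x hx
    have hx' : x = Fin.snoc (Fin.init x) (x (Fin.last n)) := by
      simp [Fin.snoc_init_self]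
    have hl : x (Fin.last n) = f (Fin.snoc (Fin.init x) false) (Fin.last n) := by
      conv_lhs => rw [← hx]
      conv_lhs => rw [hx']
      rw [key]
    rw [hl] at hx'
    exact hx'
  refine ⟨?_, ?_, ?_⟩
  · -- MapsTo
    intro x hx
    have hx : f x = x := hx
    have hform := steady_form x hx
    show g (Fin.init x) = Fin.init x
    funext i
    rw [hg, ← hform, hx]
    rfl
  · -- InjOn
    intro x hx x' hx' hinit
    have h1 := steady_form x hx
    have h2 := steady_form x' hx'
    rw [h1, h2, hinit]
  · -- SurjOn
    intro y hy
    have hy : g y = y := hy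
    refine ⟨Fin.snoc y (f (Fin.snoc y false) (Fin.last n)), ?_, by simp [Fin.init_snoc]⟩
    show f (Fin.snoc y (f (Fin.snoc y false) (Fin.last n))) = _
    funext j
    refine Fin.lastCases ?_ ?_ j
    · rw [key]
      simp
    · intro i
      rw [← hg, hy]
      simp
end

section
/- Let f be a Boolean network on n+1 variables whose last component does not depend on the last coordinate, and let g be the reduction of f obtained by eliminating the last variable. Then the number of steady states of f equals the number of steady states of g, i.e., Fintype.card {x // f x = x} = Fintype.card {y // g y = y}. -/
lemma snoc_eq_update {n : ℕ} (x : Fin (n+1) → Bool) (b : Bool) :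
    Fin.snoc (Fin.init x) b = Function.update x (Fin.last n) b := by
  funext i
  refine Fin.lastCases ?_ ?_ i
  · simp
  · intro j
    simp [Fin.init, Function.update_of_ne (Fin.castSucc_lt_last j).ne]

/-- `f` and its reduction `g` have the same number of steady states. -/
theorem steady_state_card (n : ℕ)
    (f : (Fin (n+1) → Bool) → (Fin (n+1) → Bool))
    (hf : ∀ (x : Fin (n+1) → Bool) (b : Bool),
      f (Function.update x (Fin.last n) b) (Fin.last n) = f x (Fin.last n))
    (g : (Fin n → Bool) → (Fin n → Bool))
    (hg : ∀ (y : Fin n → Bool) (i : Fin n),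
      g y i = f (Fin.snoc y (f (Fin.snoc y false) (Fin.last n))) (Fin.castSucc i)) :
    Fintype.card {x // f x = x} = Fintype.card {y // g y = y} := by
  have hlast : ∀ (y : Fin n → Bool) (b : Bool),
      f (Fin.snoc y b) (Fin.last n) = f (Fin.snoc y false) (Fin.last n) := by
    intro y b
    have h := hf (Fin.snoc y false) b
    rw [← snoc_eq_update, Fin.init_snoc] at h
    exact h
  refine Fintype.card_congr ?_
  refine ⟨fun x => ⟨Fin.init x.1, ?_⟩, fun y => ⟨Fin.snoc y.1 (f (Fin.snoc y.1 false) (Fin.last n)), ?_⟩, ?_, ?_⟩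
  · obtain ⟨x, hx⟩ := x
    have hxlast : x (Fin.last n) = f (Fin.snoc (Fin.init x) false) (Fin.last n) := by
      have h := hlast (Fin.init x) (x (Fin.last n))
      rw [Fin.snoc_init_self] at h
      rw [← h]
      exact (congrFun hx (Fin.last n)).symm
    have hxeq : Fin.snoc (Fin.init x) (f (Fin.snoc (Fin.init x) false) (Fin.last n)) = x := by
      rw [← hxlast, Fin.snoc_init_self]
    funext i
    rw [hg, hxeq]
    calc f x (Fin.castSucc i) = x (Fin.castSucc i) := congrFun hx _
      _ = Fin.init x i := rfl
  · obtain ⟨y, hy⟩ := y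
    set c := f (Fin.snoc y false) (Fin.last n) with hc
    funext i
    refine Fin.lastCases ?_ ?_ i
    · rw [Fin.snoc_last, hlast y c]
    · intro j
      rw [Fin.snoc_castSucc, ← hg, congrFun hy j]
  · intro x
    obtain ⟨x, hx⟩ := x
    apply Subtype.ext
    dsimp only
    have h : f (Fin.snoc (Fin.init x) false) (Fin.last n) = x (Fin.last n) := by
      have h2 := hlast (Fin.init x) (x (Fin.last n))
      rw [Fin.snoc_init_self] at h2
      rw [← h2]
      exact congrFun hx (Fin.last n)
    rw [h, Fin.snoc_init_self]
  · intro y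
    obtain ⟨y, hy⟩ := y
    apply Subtype.ext
    simp
end

section
/- Let f be a Boolean network on n+1 variables whose last component does not depend on the last coordinate, and let g be the reduction of f obtained by eliminating the last variable. Then f has a steady state if and only if g has a steady state; equivalently, f has no steady state (is an oscillatory system) if and only if g has no steady state. -/
/-- `f` has a steady state iff its reduction `g` has a steady state. -/
theorem steady_state_exists_iff (n : ℕ)
    (f : (Fin (n+1) → Bool) → (Fin (n+1) → Bool))
    (hf : ∀ (x : Fin (n+1) → Bool) (b : Bool),
      f (Function.update x (Fin.last n) b) (Fin.last n) = f x (Fin.last n))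
    (g : (Fin n → Bool) → (Fin n → Bool))
    (hg : ∀ (y : Fin n → Bool) (i : Fin n),
      g y i = f (Fin.snoc y (f (Fin.snoc y false) (Fin.last n))) (Fin.castSucc i)) :
    (∃ x, f x = x) ↔ (∃ y, g y = y) := by
  have key : ∀ (y : Fin n → Bool) (b : Bool),
      f (Fin.snoc y b) (Fin.last n) = f (Fin.snoc y false) (Fin.last n) := by
    intro y b
    have h := hf (Fin.snoc y false) b
    rwa [Fin.update_snoc_last] at h
  constructor
  · rintro ⟨x, hx⟩
    refine ⟨Fin.init x, funext fun i => ?_⟩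
    have hxlast : x (Fin.last n) = f (Fin.snoc (Fin.init x) false) (Fin.last n) := by
      conv_lhs => rw [← hx]
      rw [← key (Fin.init x) (x (Fin.last n)), Fin.snoc_init_self]
    rw [hg, ← hxlast, Fin.snoc_init_self, hx, Fin.init]
  · rintro ⟨y, hy⟩
    refine ⟨Fin.snoc y (f (Fin.snoc y false) (Fin.last n)), funext fun i => ?_⟩
    refine Fin.lastCases ?_ (fun i => ?_) i
    · rw [key, Fin.snoc_last]
    · rw [← hg, hy, Fin.snoc_castSucc]
end

section
/- Let f be a Boolean network on m variables and let a, b : Fin m with a ≠ b. Assume component a of f does not depend on coordinate a and component b of f does not depend on coordinate b. Let S_a f and S_b f denote the substitution networks obtained by substituting the value of component a (respectively b) into all coordinates a (respectively b). Assume further that component b of S_a f does not depend on coordinate b, and that component a of S_b f does not depend on coordinate a (so that the second eliminations are defined). Then the order of elimination does not matter: for every state x and every coordinate i with i ≠ a and i ≠ b, (S_b (S_a f)) x i = (S_a (S_b f)) x i. -/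
/-- The substitution network `sub a f`: every component of `f` is evaluated with
coordinate `a` replaced by the value of component `a` of `f`. -/
def sub {m : ℕ} (a : Fin m) (f : (Fin m → Bool) → (Fin m → Bool)) :
    (Fin m → Bool) → (Fin m → Bool) :=
  fun x i => f (Function.update x a (f x a)) i

/-- The order of elimination of two variables does not matter. -/
theorem elimination_order_independent (m : ℕ)
    (f : (Fin m → Bool) → (Fin m → Bool)) (a b : Fin m) (hab : a ≠ b)
    (ha : ∀ (x : Fin m → Bool) (v : Bool), f (Function.update x a v) a = f x a)
    (hb : ∀ (x : Fin m → Bool) (v : Bool), f (Function.update x b v) b = f x b)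
    (hb' : ∀ (x : Fin m → Bool) (v : Bool),
      sub a f (Function.update x b v) b = sub a f x b)
    (ha' : ∀ (x : Fin m → Bool) (v : Bool),
      sub b f (Function.update x a v) a = sub b f x a)
    (x : Fin m → Bool) (i : Fin m) (hia : i ≠ a) (hib : i ≠ b) :
    sub b (sub a f) x i = sub a (sub b f) x i := by
  have hA2 : f (Function.update x b (f (Function.update x a (f x a)) b)) a
      = f (Function.update x b (f x b)) a := by
    have h1 := ha' x (f x a)
    simp only [sub] at h1
    rwa [Function.update_comm hab, ha] at h1
  have hB2 : f (Function.update x a (f (Function.update x b (f x b)) a)) b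
      = f (Function.update x a (f x a)) b := by
    have h1 := hb' x (f x b)
    simp only [sub] at h1
    rwa [Function.update_comm hab.symm, hb] at h1
  simp only [sub]
  rw [hA2, hB2, Function.update_comm hab.symm]
end

section
/- Let f be a Boolean network on n+1 variables whose last component does not depend on the last coordinate, and let g be the reduction of f obtained by eliminating the last variable. Let i, j : Fin n. If component i of g depends on coordinate j, then either component (Fin.castSucc i) of f depends on coordinate (Fin.castSucc j), or both component (Fin.castSucc i) of f depends on the last coordinate Fin.last n and the last component of f depends on coordinate (Fin.castSucc j). In particular, every edge of the wiring diagram of g comes from a path of length one or two in the wiring diagram of f. -/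
/-!
Write `c y` for the value of the last component at `Fin.snoc y false`, so that
`g y i = f (Fin.snoc y (c y)) i`. If flipping `y j` (giving `y'`) changes `g · i`, then either
`f (Fin.snoc y' (c y)) i ≠ f (Fin.snoc y (c y)) i`, a direct edge `j → i`, or
`f (Fin.snoc y' (c y')) i ≠ f (Fin.snoc y' (c y)) i`; in the latter case `c y' ≠ c y`, which gives
the edges `j → last` and `last → i`.
-/

/-- Component `i` of `f` depends on coordinate `j`. -/
def BoolNetDependsOn {m : ℕ} (f : (Fin m → Bool) → (Fin m → Bool)) (i j : Fin m) : Prop :=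
  ∃ (x : Fin m → Bool) (b : Bool), f (Function.update x j b) i ≠ f x i

theorem boolNetDependsOn_castSucc_of_snoc_update_ne {n : ℕ}
    {f : (Fin (n+1) → Bool) → (Fin (n+1) → Bool)} {i : Fin (n+1)} {j : Fin n}
    {y : Fin n → Bool} {b d : Bool}
    (h : f (Fin.snoc (Function.update y j b) d) i ≠ f (Fin.snoc y d) i) :
    BoolNetDependsOn f i (Fin.castSucc j) :=
  ⟨Fin.snoc y d, b, by rwa [← Fin.snoc_update]⟩

theorem boolNetDependsOn_last_of_snoc_ne {n : ℕ}
    {f : (Fin (n+1) → Bool) → (Fin (n+1) → Bool)} {i : Fin (n+1)}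
    {y : Fin n → Bool} {d d' : Bool}
    (h : f (Fin.snoc y d') i ≠ f (Fin.snoc y d) i) :
    BoolNetDependsOn f i (Fin.last n) :=
  ⟨Fin.snoc y d, d', by rwa [Fin.update_snoc_last]⟩

theorem edge_of_reduction_general (n : ℕ)
    (f : (Fin (n+1) → Bool) → (Fin (n+1) → Bool))
    (g : (Fin n → Bool) → (Fin n → Bool))
    (hg : ∀ (y : Fin n → Bool) (i : Fin n),
      g y i = f (Fin.snoc y (f (Fin.snoc y false) (Fin.last n))) (Fin.castSucc i))
    (i j : Fin n) (h : BoolNetDependsOn g i j) :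
    BoolNetDependsOn f (Fin.castSucc i) (Fin.castSucc j) ∨
      (BoolNetDependsOn f (Fin.castSucc i) (Fin.last n) ∧
        BoolNetDependsOn f (Fin.last n) (Fin.castSucc j)) := by
  obtain ⟨y, b, hne⟩ := h
  set y' := Function.update y j b
  set c := f (Fin.snoc y false) (Fin.last n)
  set c' := f (Fin.snoc y' false) (Fin.last n)
  rw [hg, hg] at hne
  by_cases hdirect : f (Fin.snoc y' c) (Fin.castSucc i) = f (Fin.snoc y c) (Fin.castSucc i)
  · have hlast : f (Fin.snoc y' c') (Fin.castSucc i) ≠ f (Fin.snoc y' c) (Fin.castSucc i) := by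
      rwa [hdirect]
    have hcc : c' ≠ c := ne_of_apply_ne (fun d => f (Fin.snoc y' d) (Fin.castSucc i)) hlast
    exact Or.inr ⟨boolNetDependsOn_last_of_snoc_ne hlast,
      boolNetDependsOn_castSucc_of_snoc_update_ne hcc⟩
  · exact Or.inl (boolNetDependsOn_castSucc_of_snoc_update_ne hdirect)

/-- Every edge of the wiring diagram of the reduction `g` comes from
a path of length one or two in the wiring diagram of `f`. -/
theorem edge_of_reduction (n : ℕ)
    (f : (Fin (n+1) → Bool) → (Fin (n+1) → Bool))
    (hf : ∀ (x : Fin (n+1) → Bool) (b : Bool),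
      f (Function.update x (Fin.last n) b) (Fin.last n) = f x (Fin.last n))
    (g : (Fin n → Bool) → (Fin n → Bool))
    (hg : ∀ (y : Fin n → Bool) (i : Fin n),
      g y i = f (Fin.snoc y (f (Fin.snoc y false) (Fin.last n))) (Fin.castSucc i))
    (i j : Fin n) (h : BoolNetDependsOn g i j) :
    BoolNetDependsOn f (Fin.castSucc i) (Fin.castSucc j) ∨
      (BoolNetDependsOn f (Fin.castSucc i) (Fin.last n) ∧
        BoolNetDependsOn f (Fin.last n) (Fin.castSucc j)) :=
  edge_of_reduction_general n f g hg i j h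
end

section
/- Let f be a Boolean network on n+1 variables whose last component does not depend on the last coordinate, and let g be the reduction of f obtained by eliminating the last variable. Define the edge relation E_g j i ↔ component i of g depends on coordinate j, and E_f j i ↔ component i of f depends on coordinate j. If there is a path from j to i in the wiring diagram of g (i.e., Relation.TransGen E_g j i), then there is a path from Fin.castSucc j to Fin.castSucc i in the wiring diagram of f (i.e., Relation.TransGen E_f (Fin.castSucc j) (Fin.castSucc i)). -/
/-- Component `i` of `f` depends on coordinate `j`. -/
def NetDependsOn {m : ℕ} (f : (Fin m → Bool) → (Fin m → Bool)) (i j : Fin m) : Prop :=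
  ∃ (x : Fin m → Bool) (b : Bool), f (Function.update x j b) i ≠ f x i

/-!
A change of `y` at `j` that changes the reduction at `i` changes the input
`Fin.snoc y (f (Fin.snoc y false) (Fin.last n))` of `f` at `j`, possibly also at the last
coordinate. Splitting the change into these two steps, either component `i` of `f` already
sees the change at `j`, or it sees the change of the last coordinate, which in turn was
caused by the change at `j`: a path `j → last → i` of length two.
-/

namespace NetDependsOn

variable {n : ℕ} {f : (Fin (n + 1) → Bool) → (Fin (n + 1) → Bool)}

def reduce (f : (Fin (n + 1) → Bool) → (Fin (n + 1) → Bool)) :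
    (Fin n → Bool) → (Fin n → Bool) :=
  fun y i => f (Fin.snoc y (f (Fin.snoc y false) (Fin.last n))) i.castSucc

lemma of_snoc_update_ne {k : Fin (n + 1)} {y : Fin n → Bool} {j : Fin n} {b d : Bool}
    (h : f (Fin.snoc (Function.update y j b) d) k ≠ f (Fin.snoc y d) k) :
    NetDependsOn f k j.castSucc :=
  ⟨Fin.snoc y d, b, by rwa [← Fin.snoc_update]⟩

lemma last_of_snoc_ne {k : Fin (n + 1)} {y : Fin n → Bool} {d d' : Bool}
    (h : f (Fin.snoc y d') k ≠ f (Fin.snoc y d) k) :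
    NetDependsOn f k (Fin.last n) :=
  ⟨Fin.snoc y d, d', by rwa [Fin.update_snoc_last]⟩

lemma of_reduce {i j : Fin n} (h : NetDependsOn (reduce f) i j) :
    NetDependsOn f i.castSucc j.castSucc ∨
      NetDependsOn f (Fin.last n) j.castSucc ∧ NetDependsOn f i.castSucc (Fin.last n) := by
  obtain ⟨y, b, hne⟩ := h
  set y' := Function.update y j b
  set c := f (Fin.snoc y false) (Fin.last n)
  set c' := f (Fin.snoc y' false) (Fin.last n)
  change f (Fin.snoc y' c') i.castSucc ≠ f (Fin.snoc y c) i.castSucc at hne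
  by_cases hj : f (Fin.snoc y' c') i.castSucc = f (Fin.snoc y c') i.castSucc
  · rw [hj] at hne
    have hc : c' ≠ c := fun hc => hne (by rw [hc])
    exact .inr ⟨of_snoc_update_ne hc, last_of_snoc_ne hne⟩
  · exact .inl (of_snoc_update_ne hj)

end NetDependsOn

theorem path_of_reduction_general (n : ℕ)
    (f : (Fin (n+1) → Bool) → (Fin (n+1) → Bool))
    (g : (Fin n → Bool) → (Fin n → Bool))
    (hg : ∀ (y : Fin n → Bool) (i : Fin n),
      g y i = f (Fin.snoc y (f (Fin.snoc y false) (Fin.last n))) (Fin.castSucc i))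
    (j i : Fin n)
    (h : Relation.TransGen (fun a b : Fin n => NetDependsOn g b a) j i) :
    Relation.TransGen (fun a b : Fin (n+1) => NetDependsOn f b a)
      (Fin.castSucc j) (Fin.castSucc i) := by
  obtain rfl : g = NetDependsOn.reduce f := funext fun y => funext (hg y)
  refine Relation.TransGen.lift' Fin.castSucc (fun a b hab => ?_) j i h
  rcases hab.of_reduce with hdirect | ⟨hin, hout⟩
  · exact .single hdirect
  · exact .tail (.single hin) hout

/-- A path in the wiring diagram of the reduction `g` yields a path
in the wiring diagram of `f`. -/
theorem path_of_reduction (n : ℕ)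
    (f : (Fin (n+1) → Bool) → (Fin (n+1) → Bool))
    (hf : ∀ (x : Fin (n+1) → Bool) (b : Bool),
      f (Function.update x (Fin.last n) b) (Fin.last n) = f x (Fin.last n))
    (g : (Fin n → Bool) → (Fin n → Bool))
    (hg : ∀ (y : Fin n → Bool) (i : Fin n),
      g y i = f (Fin.snoc y (f (Fin.snoc y false) (Fin.last n))) (Fin.castSucc i))
    (j i : Fin n)
    (h : Relation.TransGen (fun a b : Fin n => NetDependsOn g b a) j i) :
    Relation.TransGen (fun a b : Fin (n+1) => NetDependsOn f b a)
      (Fin.castSucc j) (Fin.castSucc i) :=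
  path_of_reduction_general n f g hg j i h
end

section
/- Let f be a Boolean network on n+1 variables whose last component does not depend on the last coordinate, and let g be the reduction of f obtained by eliminating the last variable. Let i, j : Fin n. Suppose the influence of coordinate (Fin.castSucc j) on component (Fin.castSucc i) of f is positive, the influence of the last coordinate on component (Fin.castSucc i) of f is positive, and the influence of coordinate (Fin.castSucc j) on the last component of f is positive. Then the influence of coordinate j on component i of g is positive. -/
/-- The influence of coordinate `j` on component `i` of `f` is positive
(with `Bool` ordered by `false < true`). -/
def PositiveInfluence {m : ℕ} (f : (Fin m → Bool) → (Fin m → Bool)) (j i : Fin m) : Prop :=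
  ∀ x : Fin m → Bool, f (Function.update x j false) i ≤ f (Function.update x j true) i

/-- If the direct edge and the path through the eliminated vertex are
both positive, the resulting edge in the reduction is positive. -/
theorem positive_influence_of_reduction (n : ℕ)
    (f : (Fin (n+1) → Bool) → (Fin (n+1) → Bool))
    (hf : ∀ (x : Fin (n+1) → Bool) (b : Bool),
      f (Function.update x (Fin.last n) b) (Fin.last n) = f x (Fin.last n))
    (g : (Fin n → Bool) → (Fin n → Bool))
    (hg : ∀ (y : Fin n → Bool) (i : Fin n),
      g y i = f (Fin.snoc y (f (Fin.snoc y false) (Fin.last n))) (Fin.castSucc i))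
    (i j : Fin n)
    (h1 : PositiveInfluence f (Fin.castSucc j) (Fin.castSucc i))
    (h2 : PositiveInfluence f (Fin.last n) (Fin.castSucc i))
    (h3 : PositiveInfluence f (Fin.castSucc j) (Fin.last n)) :
    ∀ y : Fin n → Bool,
      g (Function.update y j false) i ≤ g (Function.update y j true) i := by
  intro y
  have hsnoc : ∀ (b a : Bool),
      Fin.snoc (Function.update y j b) a
        = Function.update (Fin.snoc y a : Fin (n+1) → Bool) (Fin.castSucc j) b := by
    intro b a
    simp [Fin.snoc_update]
  have hupd : ∀ (z : Fin n → Bool) (c b : Bool),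
      Function.update (Fin.snoc z c : Fin (n+1) → Bool) (Fin.last n) b = Fin.snoc z b := by
    intro z c b
    simp [Fin.update_snoc_last]
  have step : ∀ (z : Fin n → Bool) (b0 b1 : Bool), b0 ≤ b1 →
      f (Fin.snoc z b0) (Fin.castSucc i) ≤ f (Fin.snoc z b1) (Fin.castSucc i) := by
    intro z b0 b1 hb
    have h := h2 (Fin.snoc z b0)
    rw [hupd z b0 false, hupd z b0 true] at h
    cases b0 <;> cases b1 <;> first | exact le_refl _ | exact h | exact absurd hb (by decide)
  set c0 := f (Fin.snoc (Function.update y j false) false) (Fin.last n) with hc0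
  set c1 := f (Fin.snoc (Function.update y j true) false) (Fin.last n) with hc1
  have hcle : c0 ≤ c1 := by
    rw [hc0, hc1, hsnoc false false, hsnoc true false]
    exact h3 (Fin.snoc y false)
  rw [hg, hg]
  calc f (Fin.snoc (Function.update y j false) c0) (Fin.castSucc i)
      ≤ f (Fin.snoc (Function.update y j false) c1) (Fin.castSucc i) :=
        step _ _ _ hcle
    _ ≤ f (Fin.snoc (Function.update y j true) c1) (Fin.castSucc i) := by
        rw [hsnoc false c1, hsnoc true c1]
        exact h1 (Fin.snoc y c1)
end

section
/- Let f be a Boolean network on n+1 variables whose last component does not depend on the last coordinate, and let g be the reduction of f obtained by eliminating the last variable. Let i, j : Fin n. Suppose the influence of coordinate (Fin.castSucc j) on component (Fin.castSucc i) of f is negative, the influence of the last coordinate on component (Fin.castSucc i) of f is positive, and the influence of coordinate (Fin.castSucc j) on the last component of f is negative (so both the direct edge and the path through the eliminated vertex are negative). Then the influence of coordinate j on component i of g is negative. -/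
private lemma snoc_upd_bool {n : ℕ} (y : Fin n → Bool) (j : Fin n) (b c : Bool) :
    Fin.snoc (Function.update y j b) c = Function.update (Fin.snoc y c : Fin (n+1) → Bool) (Fin.castSucc j) b := by
  funext k
  refine Fin.lastCases ?_ (fun k => ?_) k
  · simp [Function.update_of_ne (Fin.castSucc_lt_last j).ne']
  · rcases eq_or_ne k j with rfl | hk
    · simp
    · simp [Function.update_of_ne hk, Function.update_of_ne (fun h => hk (Fin.castSucc_injective _ h))]


/-- The influence of coordinate `j` on component `i` of `f` is negative. -/
def NegativeInfluence {m : ℕ} (f : (Fin m → Bool) → (Fin m → Bool)) (j i : Fin m) : Prop :=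
  ∀ x : Fin m → Bool, f (Function.update x j true) i ≤ f (Function.update x j false) i

/-- If the direct edge is negative and the path through the eliminated
vertex is negative (negative then positive), the resulting edge in the reduction is
negative. -/
theorem negative_influence_of_reduction (n : ℕ)
    (f : (Fin (n+1) → Bool) → (Fin (n+1) → Bool))
    (hf : ∀ (x : Fin (n+1) → Bool) (b : Bool),
      f (Function.update x (Fin.last n) b) (Fin.last n) = f x (Fin.last n))
    (g : (Fin n → Bool) → (Fin n → Bool))
    (hg : ∀ (y : Fin n → Bool) (i : Fin n),
      g y i = f (Fin.snoc y (f (Fin.snoc y false) (Fin.last n))) (Fin.castSucc i))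
    (i j : Fin n)
    (h1 : NegativeInfluence f (Fin.castSucc j) (Fin.castSucc i))
    (h2 : PositiveInfluence f (Fin.last n) (Fin.castSucc i))
    (h3 : NegativeInfluence f (Fin.castSucc j) (Fin.last n)) :
    ∀ y : Fin n → Bool,
      g (Function.update y j true) i ≤ g (Function.update y j false) i := by
  intro y
  rw [hg, hg]
  set ut := Function.update y j true with hut
  set uf := Function.update y j false with huf
  have hsu : Fin.snoc ut (false : Bool) = Function.update (Fin.snoc y (false:Bool) : Fin (n+1) → Bool) (Fin.castSucc j) true := by
    rw [hut]; exact snoc_upd_bool y j true false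
  have hsu' : Fin.snoc uf (false : Bool) = Function.update (Fin.snoc y (false:Bool) : Fin (n+1) → Bool) (Fin.castSucc j) false := by
    rw [huf]; exact snoc_upd_bool y j false false
  have ha : f (Fin.snoc ut false) (Fin.last n) ≤ f (Fin.snoc uf false) (Fin.last n) := by
    rw [hsu, hsu']; exact h3 _
  set a1 := f (Fin.snoc ut false) (Fin.last n) with ha1
  set a2 := f (Fin.snoc uf false) (Fin.last n) with ha2
  have step1 : f (Fin.snoc ut a1) (Fin.castSucc i) ≤ f (Fin.snoc ut a2) (Fin.castSucc i) := by
    cases hb1 : a1 <;> cases hb2 : a2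
    · exact le_refl _
    · have := h2 (Fin.snoc ut false)
      rwa [Fin.update_snoc_last, Fin.update_snoc_last] at this
    · rw [hb1, hb2] at ha; exact absurd ha (by simp)
    · exact le_refl _
  have step2 : f (Fin.snoc ut a2) (Fin.castSucc i) ≤ f (Fin.snoc uf a2) (Fin.castSucc i) := by
    have h := h1 (Fin.snoc y a2)
    have e1 : Function.update (Fin.snoc y a2 : Fin (n+1) → Bool) (Fin.castSucc j) true = Fin.snoc ut a2 :=
      (snoc_upd_bool y j true a2).symm
    have e2 : Function.update (Fin.snoc y a2 : Fin (n+1) → Bool) (Fin.castSucc j) false = Fin.snoc uf a2 :=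
      (snoc_upd_bool y j false a2).symm
    rwa [e1, e2] at h
  exact le_trans step1 step2
end

section
/- Let f be a Boolean network on n+1 variables whose last component does not depend on the last coordinate, and let g be the reduction of f obtained by eliminating the last variable. Let i, j : Fin n. Suppose the influence of coordinate (Fin.castSucc j) on component (Fin.castSucc i) of f is negative, the influence of the last coordinate on component (Fin.castSucc i) of f is negative, and the influence of coordinate (Fin.castSucc j) on the last component of f is positive (so both the direct edge and the path through the eliminated vertex are negative). Then the influence of coordinate j on component i of g is negative. -/
/-- If the direct edge is negative and the path through the eliminated
vertex is negative (positive then negative), the resulting edge in the reduction is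
negative. -/
theorem negative_influence_of_reduction' (n : ℕ)
    (f : (Fin (n+1) → Bool) → (Fin (n+1) → Bool))
    (hf : ∀ (x : Fin (n+1) → Bool) (b : Bool),
      f (Function.update x (Fin.last n) b) (Fin.last n) = f x (Fin.last n))
    (g : (Fin n → Bool) → (Fin n → Bool))
    (hg : ∀ (y : Fin n → Bool) (i : Fin n),
      g y i = f (Fin.snoc y (f (Fin.snoc y false) (Fin.last n))) (Fin.castSucc i))
    (i j : Fin n)
    (h1 : NegativeInfluence f (Fin.castSucc j) (Fin.castSucc i))
    (h2 : NegativeInfluence f (Fin.last n) (Fin.castSucc i))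
    (h3 : PositiveInfluence f (Fin.castSucc j) (Fin.last n)) :
    ∀ y : Fin n → Bool,
      g (Function.update y j true) i ≤ g (Function.update y j false) i := by
  intro y
  rw [hg, hg]
  set ct := f (Fin.snoc (Function.update y j true) false) (Fin.last n) with hct
  set cf := f (Fin.snoc (Function.update y j false) false) (Fin.last n) with hcf
  have hcfct : cf ≤ ct := by
    rw [hct, hcf, Fin.snoc_update, Fin.snoc_update]
    exact h3 (Fin.snoc y false)
  have step1 : f (Fin.snoc (Function.update y j true) ct) (Fin.castSucc i)
      ≤ f (Fin.snoc (Function.update y j false) ct) (Fin.castSucc i) := by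
    rw [Fin.snoc_update, Fin.snoc_update]
    exact h1 (Fin.snoc y ct)
  have step2 : f (Fin.snoc (Function.update y j false) ct) (Fin.castSucc i)
      ≤ f (Fin.snoc (Function.update y j false) cf) (Fin.castSucc i) := by
    have := h2 (Fin.snoc (Function.update y j false) cf)
    rw [Fin.update_snoc_last, Fin.update_snoc_last] at this
    cases hcf' : cf <;> cases hct' : ct <;> simp_all <;> exact absurd hcfct (by decide)
  exact le_trans step1 step2
end

section
/- Let f be a Boolean network on n+1 variables whose last component does not depend on the last coordinate, and let g be the reduction of f obtained by eliminating the last variable. Define the edge relations E_g j i ↔ component i of g depends on coordinate j, and E_f j i ↔ component i of f depends on coordinate j. If there is a feedback loop at a vertex i in the wiring diagram of g (i.e., Relation.TransGen E_g i i), then there is a feedback loop at Fin.castSucc i in the wiring diagram of f (i.e., Relation.TransGen E_f (Fin.castSucc i) (Fin.castSucc i)). -/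
namespace BoolNetDependsOn

variable {n : ℕ} {f : (Fin (n + 1) → Bool) → (Fin (n + 1) → Bool)}

lemma of_snoc_update_ne {y : Fin n → Bool} {s : Bool} {i : Fin (n + 1)} {j : Fin n} {b : Bool}
    (h : f (Fin.snoc (Function.update y j b) s) i ≠ f (Fin.snoc y s) i) :
    BoolNetDependsOn f i (Fin.castSucc j) :=
  ⟨Fin.snoc y s, b, by rwa [← Fin.snoc_update]⟩

lemma last_of_snoc_ne {y : Fin n → Bool} {s s' : Bool} {i : Fin (n + 1)}
    (h : f (Fin.snoc y s') i ≠ f (Fin.snoc y s) i) :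
    BoolNetDependsOn f i (Fin.last n) :=
  ⟨Fin.snoc y s, s', by rwa [Fin.update_snoc_last]⟩

end BoolNetDependsOn

lemma transGen_castSucc_of_dependsOn_reduction {n : ℕ}
    {f : (Fin (n + 1) → Bool) → (Fin (n + 1) → Bool)} {i j : Fin n}
    (h : BoolNetDependsOn
      (fun y i => f (Fin.snoc y (f (Fin.snoc y false) (Fin.last n))) (Fin.castSucc i)) i j) :
    Relation.TransGen (fun a b : Fin (n + 1) => BoolNetDependsOn f b a)
      (Fin.castSucc j) (Fin.castSucc i) := by
  obtain ⟨y, b, hne⟩ := h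
  set y' := Function.update y j b
  set s := f (Fin.snoc y false) (Fin.last n)
  set s' := f (Fin.snoc y' false) (Fin.last n)
  change f (Fin.snoc y' s') (Fin.castSucc i) ≠ f (Fin.snoc y s) (Fin.castSucc i) at hne
  by_cases hfixed : f (Fin.snoc y' s) (Fin.castSucc i) = f (Fin.snoc y s) (Fin.castSucc i)
  · have hs : s' ≠ s := fun hs => hne (hs ▸ hfixed)
    have to_last : BoolNetDependsOn f (Fin.last n) (Fin.castSucc j) :=
      BoolNetDependsOn.of_snoc_update_ne hs
    have from_last : BoolNetDependsOn f (Fin.castSucc i) (Fin.last n) :=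
      BoolNetDependsOn.last_of_snoc_ne (hfixed ▸ hne)
    exact .head to_last (.single from_last)
  · exact .single (BoolNetDependsOn.of_snoc_update_ne hfixed)

theorem feedback_loop_of_reduction_general (n : ℕ)
    (f : (Fin (n+1) → Bool) → (Fin (n+1) → Bool))
    (g : (Fin n → Bool) → (Fin n → Bool))
    (hg : ∀ (y : Fin n → Bool) (i : Fin n),
      g y i = f (Fin.snoc y (f (Fin.snoc y false) (Fin.last n))) (Fin.castSucc i))
    (i : Fin n)
    (h : Relation.TransGen (fun a b : Fin n => BoolNetDependsOn g b a) i i) :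
    Relation.TransGen (fun a b : Fin (n+1) => BoolNetDependsOn f b a)
      (Fin.castSucc i) (Fin.castSucc i) := by
  obtain rfl : g = fun y i => f (Fin.snoc y (f (Fin.snoc y false) (Fin.last n))) (Fin.castSucc i) :=
    funext₂ hg
  exact h.lift' Fin.castSucc fun _ _ => transGen_castSucc_of_dependsOn_reduction

/-- A feedback loop at `i` in the wiring diagram of the reduction `g`
yields a feedback loop at `Fin.castSucc i` in the wiring diagram of `f`. -/
theorem feedback_loop_of_reduction (n : ℕ)
    (f : (Fin (n+1) → Bool) → (Fin (n+1) → Bool))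
    (hf : ∀ (x : Fin (n+1) → Bool) (b : Bool),
      f (Function.update x (Fin.last n) b) (Fin.last n) = f x (Fin.last n))
    (g : (Fin n → Bool) → (Fin n → Bool))
    (hg : ∀ (y : Fin n → Bool) (i : Fin n),
      g y i = f (Fin.snoc y (f (Fin.snoc y false) (Fin.last n))) (Fin.castSucc i))
    (i : Fin n)
    (h : Relation.TransGen (fun a b : Fin n => BoolNetDependsOn g b a) i i) :
    Relation.TransGen (fun a b : Fin (n+1) => BoolNetDependsOn f b a)
      (Fin.castSucc i) (Fin.castSucc i) :=
  feedback_loop_of_reduction_general n f g hg i h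
end

section
/- Let f be a Boolean network on n+1 variables whose last component does not depend on the last coordinate, and let g be the reduction of f obtained by eliminating the last variable. If a vertex i has a self loop in the wiring diagram of g (i.e., component i of g depends on coordinate i), then there is a feedback loop at Fin.castSucc i in the wiring diagram of f (i.e., Relation.TransGen E_f (Fin.castSucc i) (Fin.castSucc i), where E_f j k ↔ component k of f depends on coordinate j). -/
/-
Write `y' = update y j b`, `c = f (snoc y false) last` and `c' = f (snoc y' false) last`, so that
the reduction compares `f (snoc y' c') k` with `f (snoc y c) k` for `k = castSucc i`. Passing
through `f (snoc y' c) k`, one of the two steps changes the value: either flipping coordinate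
`castSucc j` alone changes component `k`, or flipping the last coordinate from `c` to `c'` does,
in which case `c ≠ c'` shows that the last component depends on `castSucc j` as well.
-/

open Function

def BoolNet.reduceLast {n : ℕ} (f : (Fin (n + 1) → Bool) → (Fin (n + 1) → Bool))
    (y : Fin n → Bool) (i : Fin n) : Bool :=
  f (Fin.snoc y (f (Fin.snoc y false) (Fin.last n))) (Fin.castSucc i)

theorem BoolNet.dependsOn_or_of_dependsOn_reduceLast {n : ℕ}
    {f : (Fin (n + 1) → Bool) → (Fin (n + 1) → Bool)} {i j : Fin n}
    (h : BoolNetDependsOn (BoolNet.reduceLast f) i j) :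
    BoolNetDependsOn f i.castSucc j.castSucc ∨
      BoolNetDependsOn f (Fin.last n) j.castSucc ∧ BoolNetDependsOn f i.castSucc (Fin.last n) := by
  obtain ⟨y, b, hy⟩ := h
  set c := f (Fin.snoc y false) (Fin.last n)
  set c' := f (Fin.snoc (update y j b) false) (Fin.last n)
  change f (Fin.snoc (update y j b) c') i.castSucc ≠ f (Fin.snoc y c) i.castSucc at hy
  rw [Fin.snoc_update] at hy
  by_cases hdirect : f (update (Fin.snoc y c) j.castSucc b) i.castSucc = f (Fin.snoc y c) i.castSucc
  · have hc : c' ≠ c := fun hcc => hy (hcc ▸ hdirect)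
    refine .inr ⟨⟨Fin.snoc y false, b, by rwa [← Fin.snoc_update]⟩, ?_⟩
    refine ⟨Fin.snoc (update y j b) c, c', ?_⟩
    rwa [Fin.update_snoc_last, Fin.snoc_update, Fin.snoc_update, hdirect]
  · exact .inl ⟨Fin.snoc y c, b, hdirect⟩

theorem self_loop_of_reduction_general (n : ℕ)
    (f : (Fin (n+1) → Bool) → (Fin (n+1) → Bool))
    (g : (Fin n → Bool) → (Fin n → Bool))
    (hg : ∀ (y : Fin n → Bool) (i : Fin n),
      g y i = f (Fin.snoc y (f (Fin.snoc y false) (Fin.last n))) (Fin.castSucc i))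
    (i : Fin n)
    (h : BoolNetDependsOn g i i) :
    Relation.TransGen (fun a b : Fin (n+1) => BoolNetDependsOn f b a)
      (Fin.castSucc i) (Fin.castSucc i) := by
  obtain rfl : g = BoolNet.reduceLast f := funext₂ hg
  rcases BoolNet.dependsOn_or_of_dependsOn_reduceLast h with hself | ⟨hto, hfrom⟩
  · exact .single hself
  · exact .tail (.single hto) hfrom

/-- A self loop at `i` in the wiring diagram of the reduction `g`
yields a feedback loop at `Fin.castSucc i` in the wiring diagram of `f`. -/
theorem self_loop_of_reduction (n : ℕ)
    (f : (Fin (n+1) → Bool) → (Fin (n+1) → Bool))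
    (hf : ∀ (x : Fin (n+1) → Bool) (b : Bool),
      f (Function.update x (Fin.last n) b) (Fin.last n) = f x (Fin.last n))
    (g : (Fin n → Bool) → (Fin n → Bool))
    (hg : ∀ (y : Fin n → Bool) (i : Fin n),
      g y i = f (Fin.snoc y (f (Fin.snoc y false) (Fin.last n))) (Fin.castSucc i))
    (i : Fin n)
    (h : BoolNetDependsOn g i i) :
    Relation.TransGen (fun a b : Fin (n+1) => BoolNetDependsOn f b a)
      (Fin.castSucc i) (Fin.castSucc i) :=
  self_loop_of_reduction_general n f g hg i h
end
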